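/- arXiv:2509.21835 — 5 statements merged into one kernel-verified Lean document; each statement's English description precedes it below -/
import Mathlib

section
/- Let Y be a nonempty finite set, let R : Y × Y → ℝ satisfy R(y,y') ≥ 0 for all y ≠ y' and ∑_{y∈Y} R(y,y') = 0 for every y' (each column sums to zero). Fix T > 0, let q₀ be a probability vector on Y, set q→_s := exp(sR)·q₀ for s ∈ [0,T] (matrix exponential applied to the vector), and assume q→_s(y) > 0 for every y ∈ Y and every s ∈ (0,T]. Define the reverse marginals q←_t := q→_{T−t} for t ∈ [0,T), and the reverse rates R←_t(y,y') := R(y',y)·q←_t(y)/q←_t(y') for y ≠ y', with diagonal R←_t(y',y') := −∑_{y≠y'} R←_t(y,y'). Then for every t ∈ [0,T) and every y ∈ Y, the function t ↦ q←_t(y) has derivative at t equal to ∑_{y'∈Y} R←_t(y,y')·q←_t(y'). -/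
/-!
Forward marginals solve `q' = R q` (differentiate the matrix exponential), so the reversed
marginals solve `q' = -R q`. The reverse rates are built so that `R←(y, y') q(y') = R(y', y) q(y)`
off the diagonal; together with the zero column sums of `R` this turns `R← q` into `-R q`.
-/

open Matrix Finset

-- `NormedSpace.exp` depends only on the topology, so any matrix norm serves to differentiate it.
attribute [local instance] Matrix.linftyOpNormedRing Matrix.linftyOpNormedAlgebra

theorem Matrix.hasDerivAt_exp_smul_mulVec {𝕂 Y : Type*} [RCLike 𝕂] [Fintype Y] [DecidableEq Y]
    (R : Matrix Y Y 𝕂) (q : Y → 𝕂) (s : 𝕂) :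
    HasDerivAt (fun u : 𝕂 => NormedSpace.exp (u • R) *ᵥ q)
      (R *ᵥ (NormedSpace.exp (s • R) *ᵥ q)) s := by
  let applyTo : Matrix Y Y 𝕂 →L[𝕂] Y → 𝕂 :=
    ((mulVecBilin 𝕂 𝕂).flip q).toContinuousLinearMap
  rw [mulVec_mulVec]
  exact applyTo.hasFDerivAt.comp_hasDerivAt s (hasDerivAt_exp_smul_const' R s)

section ReverseRates

variable {𝕜 Y : Type*} [Field 𝕜] {R Rrev : Matrix Y Y 𝕜} {q : Y → 𝕜}

theorem reverseRate_mul_eq (hoff : ∀ y y', y ≠ y' → Rrev y y' = R y' y * q y / q y')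
    (hq : ∀ y, q y ≠ 0) {y y' : Y} (h : y ≠ y') : Rrev y y' * q y' = R y' y * q y := by
  rw [hoff y y' h, div_mul_cancel₀ _ (hq y')]

variable [Fintype Y] [DecidableEq Y]

theorem sum_reverseRate_mul_eq_neg_mulVec (hcol : ∀ y', ∑ y, R y y' = 0)
    (hoff : ∀ y y', y ≠ y' → Rrev y y' = R y' y * q y / q y')
    (hdiag : ∀ y', Rrev y' y' = -∑ y ∈ univ.erase y', Rrev y y')
    (hq : ∀ y, q y ≠ 0) (y : Y) :
    ∑ y', Rrev y y' * q y' = -(R *ᵥ q) y := by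
  have hdiagTerm : Rrev y y * q y = -∑ z ∈ univ.erase y, R y z * q z := by
    rw [hdiag, neg_mul, sum_mul]
    congr 1
    exact sum_congr rfl fun z hz => reverseRate_mul_eq hoff hq (ne_of_mem_erase hz)
  have hcolErase : ∑ y' ∈ univ.erase y, R y' y = -R y y := by
    rw [eq_neg_iff_add_eq_zero, add_comm, add_sum_erase _ (fun y' => R y' y) (mem_univ y), hcol]
  have hoffTerms : ∑ y' ∈ univ.erase y, Rrev y y' * q y' = -(R y y * q y) := by
    rw [sum_congr rfl fun y' hy' => reverseRate_mul_eq hoff hq (ne_of_mem_erase hy').symm,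
      ← sum_mul, hcolErase, neg_mul]
  rw [← add_sum_erase _ _ (mem_univ y), hdiagTerm, hoffTerms, mulVec, dotProduct,
    ← add_sum_erase _ _ (mem_univ y)]
  ring

end ReverseRates

theorem reverse_process_kolmogorov_general
    {Y : Type*} [Fintype Y] [DecidableEq Y]
    (R : Matrix Y Y ℝ)
    (hcol : ∀ y', ∑ y, R y y' = 0)
    (T : ℝ)
    (q0 : Y → ℝ)
    (qf : ℝ → Y → ℝ)
    (hqf : ∀ s, qf s = NormedSpace.exp (s • R) *ᵥ q0)
    (hpos : ∀ s, 0 < s → s ≤ T → ∀ y, 0 < qf s y)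
    (qr : ℝ → Y → ℝ) (hqr : ∀ t, qr t = qf (T - t))
    (Rrev : ℝ → Matrix Y Y ℝ)
    (hRrevOff : ∀ t (y y' : Y), y ≠ y' →
      Rrev t y y' = R y' y * qr t y / qr t y')
    (hRrevDiag : ∀ t (y' : Y),
      Rrev t y' y' = -∑ y ∈ Finset.univ.erase y', Rrev t y y') :
    ∀ t, 0 ≤ t → t < T → ∀ y,
      HasDerivAt (fun s => qr s y) (∑ y', Rrev t y y' * qr t y') t := by
  intro t ht htT y
  have hq : ∀ z, qr t z ≠ 0 := fun z =>
    (hqr t ▸ hpos (T - t) (by linarith) (by linarith) z).ne'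
  rw [sum_reverseRate_mul_eq_neg_mulVec hcol (hRrevOff t) (hRrevDiag t) hq y]
  obtain rfl : qr = fun s => NormedSpace.exp ((T - s) • R) *ᵥ q0 :=
    funext fun s => (hqr s).trans (hqf _)
  exact hasDerivAt_pi.1 ((hasDerivAt_exp_smul_mulVec R q0 (T - t)).comp_const_sub T t) y

/-- The reverse-time marginals of a continuous-time Markov chain on a finite state
space satisfy the reverse Kolmogorov equation with the reverse transition rates. -/
theorem reverse_process_kolmogorov
    {Y : Type*} [Fintype Y] [DecidableEq Y] [Nonempty Y]
    (R : Matrix Y Y ℝ)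
    (hoff : ∀ y y', y ≠ y' → 0 ≤ R y y')
    (hcol : ∀ y', ∑ y, R y y' = 0)
    (T : ℝ) (hT : 0 < T)
    (q0 : Y → ℝ) (hq0nonneg : ∀ y, 0 ≤ q0 y) (hq0sum : ∑ y, q0 y = 1)
    (qf : ℝ → Y → ℝ)
    (hqf : ∀ s, qf s = NormedSpace.exp (s • R) *ᵥ q0)
    (hpos : ∀ s, 0 < s → s ≤ T → ∀ y, 0 < qf s y)
    (qr : ℝ → Y → ℝ) (hqr : ∀ t, qr t = qf (T - t))
    (Rrev : ℝ → Matrix Y Y ℝ)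
    (hRrevOff : ∀ t (y y' : Y), y ≠ y' →
      Rrev t y y' = R y' y * qr t y / qr t y')
    (hRrevDiag : ∀ t (y' : Y),
      Rrev t y' y' = -∑ y ∈ Finset.univ.erase y', Rrev t y y') :
    ∀ t, 0 ≤ t → t < T → ∀ y,
      HasDerivAt (fun s => qr s y) (∑ y', Rrev t y y' * qr t y') t :=
  reverse_process_kolmogorov_general R hcol T q0 qf hqf hpos qr hqr Rrev hRrevOff hRrevDiag
end

section
/- Under Assumption [A2], for every t > 0 the Kullback–Leibler divergence between q_t and q̃_t satisfies KL(q_t ‖ q̃_t) ≤ (1 + e^{−t})^d − 1. Consequently, for every ε with 0 < ε ≤ 1, if t ≥ ln(4d/ε) then KL(q_t ‖ q̃_t) ≤ ε. -/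
/-!
Under [A2] the forward process masks the coordinates of a clean sequence independently, each
at rate `1`. Hence `q_t(y) = e^{-t(d-m)} (1 - e^{-t})^m q₀{y₀ : y₀ agrees with y off its masks}`
with `m = numK y`; this closed form solves `q' = R q` with `q(0) = q₀`, so it is `exp(tR) q₀` by
uniqueness for linear ODEs. Comparing it with `q̃_t` gives `q_t ≤ (1 + e^{-t})^d q̃_t` pointwise,
whence `KL(q_t ‖ q̃_t) ≤ log (1 + e^{-t})^d ≤ (1 + e^{-t})^d - 1`. For the second claim,
`t ≥ ln(4d/ε)` means `4d e^{-t} ≤ ε`, and `(1 + a)^d - 1 ≤ 2da` once `da ≤ 1`.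
-/

open Matrix Finset

/-- The mask token: token `K` in the vocabulary `{1,…,K}`, modeled as the last
element of `Fin K`. -/
def maskTok (K : ℕ) [NeZero K] : Fin K :=
  ⟨K - 1, Nat.sub_lt (Nat.pos_of_ne_zero (NeZero.ne K)) Nat.one_pos⟩

/-- The number of mask tokens in a sequence. -/
def numK (K d : ℕ) [NeZero K] (y : Fin d → Fin K) : ℕ :=
  (Finset.univ.filter fun i => y i = maskTok K).card

/-- Hamming distance between two sequences. -/
def ham {K d : ℕ} (y y' : Fin d → Fin K) : ℕ :=
  (Finset.univ.filter fun i => y i ≠ y' i).card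

/-- The masked (absorbing) forward transition-rate matrix: `R y y' = 1` if
`Ham(y,y') = 1` and the differing coordinate of `y` is the mask token,
`R y' y' = -(d - numK y')`, and `0` otherwise. -/
noncomputable def fwdRate (K d : ℕ) [NeZero K] :
    Matrix (Fin d → Fin K) (Fin d → Fin K) ℝ := fun y y' =>
  if y = y' then -((d : ℝ) - (numK K d y' : ℝ))
  else if ham y y' = 1 ∧ ∀ i, y i ≠ y' i → y i = maskTok K then 1 else 0

/-- The forward marginal at time `t`: `q_t = exp(tR) · q₀`. -/
noncomputable def qt (K d : ℕ) [NeZero K] (q0 : (Fin d → Fin K) → ℝ) (t : ℝ) :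
    (Fin d → Fin K) → ℝ :=
  NormedSpace.exp (t • fwdRate K d) *ᵥ q0

/-- The comparison distribution `q̃_t(y) = e^{-t(d - numK y)} / (1+e^{-t})^d`. -/
noncomputable def qTilde (K d : ℕ) [NeZero K] (t : ℝ) (y : Fin d → Fin K) : ℝ :=
  Real.exp (-t * ((d : ℝ) - (numK K d y : ℝ))) / (1 + Real.exp (-t)) ^ d

/-- KL divergence between two nonnegative vectors on a finite set. -/
noncomputable def KLdiv {Y : Type*} [Fintype Y] (p q : Y → ℝ) : ℝ :=
  ∑ y, if 0 < p y then p y * Real.log (p y / q y) else 0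

open Function

theorem NormedSpace.exp_smul_mul_eq_of_hasDerivAt {𝔸 : Type*} [NormedRing 𝔸]
    [NormedAlgebra ℝ 𝔸] [CompleteSpace 𝔸] {A : 𝔸} {V : ℝ → 𝔸}
    (hV : ∀ t, HasDerivAt V (A * V t) t) (t : ℝ) :
    NormedSpace.exp (t • A) * V 0 = V t := by
  have hderiv : ∀ u, HasDerivAt (fun u => NormedSpace.exp ((t - u) • A) * V u) 0 u := fun u =>
    (((hasDerivAt_exp_smul_const A (t - u)).scomp u ((hasDerivAt_id u).const_sub t)).mul
      (hV u)).congr_deriv (by simp [mul_assoc])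
  simpa using is_const_of_deriv_eq_zero (fun u => (hderiv u).differentiableAt)
    (fun u => (hderiv u).deriv) 0 t

theorem Matrix.exp_smul_mulVec_eq_of_hasDerivAt {n : Type*} [Fintype n] [DecidableEq n]
    {A : Matrix n n ℝ} {v : ℝ → n → ℝ} (hv : ∀ t, HasDerivAt v (A *ᵥ v t) t) (t : ℝ) :
    NormedSpace.exp (t • A) *ᵥ v 0 = v t := by
  -- Every column of `replicateCol n (v t)` is `v t`, so it solves the same ODE in the Banach
  -- algebra of matrices, normed here by the `L∞` operator norm.
  let _ := Matrix.linftyOpNormedRing (n := n) (α := ℝ)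
  let _ := Matrix.linftyOpNormedAlgebra (R := ℝ) (n := n) (α := ℝ)
  let L : (n → ℝ) →ₗ[ℝ] Matrix n n ℝ :=
    { toFun := replicateCol n, map_add' := replicateCol_add, map_smul' := replicateCol_smul }
  have hV : ∀ t, HasDerivAt (fun u => replicateCol n (v u)) (A * replicateCol n (v t)) t :=
    fun t => by
      rw [← replicateCol_mulVec]
      exact (LinearMap.toContinuousLinearMap L).hasFDerivAt.comp_hasDerivAt t (hv t)
  funext i
  exact congrFun (congrFun (NormedSpace.exp_smul_mul_eq_of_hasDerivAt hV t) i) i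

theorem KLdiv_le_log_of_le_mul {Y : Type*} [Fintype Y] {p q : Y → ℝ} {C : ℝ}
    (hp : ∀ y, 0 ≤ p y) (hsum : ∑ y, p y = 1) (hq : ∀ y, 0 < q y) (hC : ∀ y, p y ≤ C * q y) :
    KLdiv p q ≤ Real.log C := by
  calc KLdiv p q ≤ ∑ y, p y * Real.log C := sum_le_sum fun y _ => by
        split_ifs with hpy
        · exact mul_le_mul_of_nonneg_left (Real.log_le_log (div_pos hpy (hq y))
            ((div_le_iff₀ (hq y)).mpr (hC y))) (hp y)
        · rw [← (hp y).antisymm (not_lt.mp hpy), zero_mul]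
    _ = Real.log C := by rw [← sum_mul, hsum, one_mul]

theorem one_add_pow_sub_one_le {a : ℝ} (ha : 0 ≤ a) {n : ℕ} (hna : n * a ≤ 1) :
    (1 + a) ^ n - 1 ≤ 2 * (n * a) := by
  have hexp : (1 + a) ^ n ≤ Real.exp (n * a) := by
    rw [Real.exp_nat_mul]
    exact pow_le_pow_left₀ (by linarith) (by linarith [Real.add_one_le_exp a]) n
  have hna0 : 0 ≤ n * a := by positivity
  have := Real.abs_exp_sub_one_le (x := n * a) (by rwa [abs_of_nonneg hna0])
  rw [abs_of_nonneg hna0] at this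
  linarith [le_abs_self (Real.exp (n * a) - 1)]

theorem mul_exp_neg_le_of_log_div_le {c ε t : ℝ} (hc : 0 ≤ c) (hε : 0 < ε)
    (ht : Real.log (c / ε) ≤ t) : c * Real.exp (-t) ≤ ε := by
  rcases hc.eq_or_lt with rfl | hc
  · simpa using hε.le
  calc c * Real.exp (-t) ≤ c * Real.exp (-Real.log (c / ε)) := by gcongr
    _ = ε := by rw [Real.exp_neg, Real.exp_log (by positivity)]; field_simp

theorem exp_neg_mul_sub_eq_pow (t : ℝ) {n m : ℕ} (hm : m ≤ n) :
    Real.exp (-t * ((n : ℝ) - m)) = Real.exp (-t) ^ (n - m) := by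
  rw [← Real.exp_nat_mul, Nat.cast_sub hm]
  ring_nf

section MaskedForwardProcess

variable {K d : ℕ} [NeZero K]

theorem numK_eq_zero_iff {y : Fin d → Fin K} : numK K d y = 0 ↔ ∀ i, y i ≠ maskTok K := by
  simp [numK, filter_eq_empty_iff]

theorem numK_update_of_eq_maskTok {y : Fin d → Fin K} {i : Fin d} {b : Fin K}
    (hi : y i = maskTok K) (hb : b ≠ maskTok K) :
    numK K d (update y i b) = numK K d y - 1 := by
  have : ({j | update y i b j = maskTok K} : Finset (Fin d)) =
      ({j | y j = maskTok K} : Finset (Fin d)).erase i := by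
    ext j
    rcases eq_or_ne j i with rfl | hj <;> simp [*]
  rw [numK, this, card_erase_of_mem (by simpa using hi), numK]

def unmaskings (y : Fin d → Fin K) : Finset (Fin d × Fin K) :=
  ({i | y i = maskTok K} : Finset (Fin d)) ×ˢ univ.erase (maskTok K)

theorem mem_unmaskings {y : Fin d → Fin K} {p : Fin d × Fin K} :
    p ∈ unmaskings y ↔ y p.1 = maskTok K ∧ p.2 ≠ maskTok K := by
  simp [unmaskings]

theorem update_injOn_unmaskings (y : Fin d → Fin K) :
    Set.InjOn (fun p : Fin d × Fin K => update y p.1 p.2) (unmaskings y) := by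
  rintro ⟨i, b⟩ hib ⟨i', b'⟩ hib' h
  rw [mem_coe, mem_unmaskings] at hib hib'
  have hbi := congrFun h i
  rcases eq_or_ne i i' with rfl | hii
  · simp_all
  · simp [update_of_ne hii, hib.1] at hbi
    exact absurd hbi hib.2

theorem ham_eq_one_and_masked_iff {y y' : Fin d → Fin K} :
    (ham y y' = 1 ∧ ∀ i, y i ≠ y' i → y i = maskTok K) ↔
      y' ∈ (unmaskings y).image fun p => update y p.1 p.2 := by
  simp only [mem_image, mem_unmaskings, Prod.exists]
  constructor
  · rintro ⟨hham, hmask⟩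
    obtain ⟨i, hi⟩ := card_eq_one.mp hham
    have hdiff : ∀ j, y j ≠ y' j ↔ j = i := fun j => by
      simpa using congrArg (j ∈ ·) hi
    have hyi := hmask i ((hdiff i).mpr rfl)
    refine ⟨i, y' i, ⟨hyi, hyi ▸ (hdiff i).mpr rfl |>.symm⟩, ?_⟩
    exact update_eq_iff.mpr ⟨rfl, fun j hj => not_not.mp fun h => hj ((hdiff j).mp h)⟩
  · rintro ⟨i, b, ⟨hi, hb⟩, rfl⟩
    have hdiff : ∀ j, y j ≠ update y i b j ↔ j = i := fun j => by
      rcases eq_or_ne j i with rfl | hj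
      · simp [hi, Ne.symm hb]
      · simp [hj]
    refine ⟨card_eq_one.mpr ⟨i, ?_⟩, fun j hj => (hdiff j).mp hj ▸ hi⟩
    ext j
    simpa using hdiff j

theorem fwdRate_apply (y y' : Fin d → Fin K) :
    fwdRate K d y y' = (if y = y' then -((d : ℝ) - numK K d y) else 0) +
      if y' ∈ (unmaskings y).image (fun p => update y p.1 p.2) then 1 else 0 := by
  rw [if_congr ham_eq_one_and_masked_iff.symm rfl rfl, fwdRate]
  split_ifs with h h' <;> subst_vars <;> simp_all [ham]

theorem fwdRate_mulVec_apply (f : (Fin d → Fin K) → ℝ) (y : Fin d → Fin K) :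
    (fwdRate K d *ᵥ f) y = ∑ i with y i = maskTok K, ∑ b ∈ univ.erase (maskTok K),
      f (update y i b) - ((d : ℝ) - numK K d y) * f y := by
  simp only [mulVec, dotProduct, fwdRate_apply, add_mul, sum_add_distrib, ite_mul, one_mul,
    zero_mul, sum_ite_eq, mem_univ, if_true, ← sum_filter]
  rw [filter_mem_eq_inter, univ_inter, sum_image (update_injOn_unmaskings y), unmaskings,
    sum_product, add_comm]
  ring

noncomputable def unmaskedMarginal (q0 : (Fin d → Fin K) → ℝ) (y : Fin d → Fin K) : ℝ :=
  ∑ y0 with ∀ i, y i ≠ maskTok K → y0 i = y i, q0 y0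

noncomputable def qtClosedForm (q0 : (Fin d → Fin K) → ℝ) (t : ℝ) (y : Fin d → Fin K) : ℝ :=
  Real.exp (-t * ((d : ℝ) - numK K d y)) * (1 - Real.exp (-t)) ^ numK K d y *
    unmaskedMarginal q0 y

variable {q0 : (Fin d → Fin K) → ℝ}

theorem unmaskedMarginal_nonneg (hq0 : ∀ y, 0 ≤ q0 y) (y : Fin d → Fin K) :
    0 ≤ unmaskedMarginal q0 y :=
  sum_nonneg fun y0 _ => hq0 y0

theorem unmaskedMarginal_le_one (hq0 : ∀ y, 0 ≤ q0 y) (hsum : ∑ y, q0 y = 1)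
    (y : Fin d → Fin K) : unmaskedMarginal q0 y ≤ 1 :=
  hsum ▸ sum_le_sum_of_subset_of_nonneg (filter_subset _ _) fun y0 _ _ => hq0 y0

theorem unmaskedMarginal_update {y : Fin d → Fin K} {i : Fin d} (hi : y i = maskTok K)
    {b : Fin K} (hb : b ≠ maskTok K) :
    unmaskedMarginal q0 (update y i b) =
      ∑ y0 with ∀ j, y j ≠ maskTok K → y0 j = y j, if y0 i = b then q0 y0 else 0 := by
  rw [← sum_filter, filter_filter, unmaskedMarginal]
  congr 1
  ext y0
  simp only [mem_filter, mem_univ, true_and]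
  constructor
  · intro h
    refine ⟨fun j hj => ?_, by simpa [hb] using h i⟩
    have hji : j ≠ i := by rintro rfl; exact hj hi
    simpa [hji, hj] using h j
  · rintro ⟨h, rfl⟩ j
    rcases eq_or_ne j i with rfl | hji <;> simp_all

theorem sum_unmaskedMarginal_update (hsupp : ∀ y i, y i = maskTok K → q0 y = 0)
    {y : Fin d → Fin K} {i : Fin d} (hi : y i = maskTok K) :
    ∑ b ∈ univ.erase (maskTok K), unmaskedMarginal q0 (update y i b) =
      unmaskedMarginal q0 y := by
  rw [sum_congr rfl fun b hb => unmaskedMarginal_update hi (ne_of_mem_erase hb), sum_comm]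
  refine sum_congr rfl fun y0 _ => ?_
  rw [sum_ite_eq]
  split_ifs with h
  · rfl
  · exact (hsupp y0 i (by simpa using h)).symm

theorem qtClosedForm_zero (hsupp : ∀ y i, y i = maskTok K → q0 y = 0) :
    qtClosedForm q0 0 = q0 := by
  funext y
  rcases eq_or_ne (numK K d y) 0 with h | h
  · have hy := numK_eq_zero_iff.mp h
    have : ({y0 | ∀ i, y i ≠ maskTok K → y0 i = y i} : Finset _) = {y} := by
      ext y0
      simp [funext_iff, hy]
    simp [qtClosedForm, unmaskedMarginal, h, this]
  · obtain ⟨i, hi⟩ := not_forall_not.mp (mt numK_eq_zero_iff.mpr h)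
    simp [qtClosedForm, h, hsupp y i hi]

theorem hasDerivAt_qtClosedForm (t : ℝ) (y : Fin d → Fin K) :
    HasDerivAt (fun u => qtClosedForm q0 u y)
      (numK K d y * (Real.exp (-t * ((d : ℝ) - numK K d y + 1)) *
          (1 - Real.exp (-t)) ^ (numK K d y - 1) * unmaskedMarginal q0 y) -
        ((d : ℝ) - numK K d y) * qtClosedForm q0 t y) t := by
  have hexp : HasDerivAt (fun u => Real.exp (-u * ((d : ℝ) - numK K d y)))
      (Real.exp (-t * ((d : ℝ) - numK K d y)) * -((d : ℝ) - numK K d y)) t := by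
    simpa using ((hasDerivAt_neg t).mul_const ((d : ℝ) - numK K d y)).exp
  have hmask := (((hasDerivAt_neg t).exp).const_sub 1).pow (numK K d y)
  refine ((hexp.mul hmask).mul_const (unmaskedMarginal q0 y)).congr_deriv ?_
  rw [qtClosedForm, show -t * ((d : ℝ) - numK K d y + 1) = -t * ((d : ℝ) - numK K d y) + -t by
    ring, Real.exp_add, Pi.pow_apply]
  ring

theorem fwdRate_mulVec_qtClosedForm (hsupp : ∀ y i, y i = maskTok K → q0 y = 0) (t : ℝ)
    (y : Fin d → Fin K) :
    (fwdRate K d *ᵥ qtClosedForm q0 t) y =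
      numK K d y * (Real.exp (-t * ((d : ℝ) - numK K d y + 1)) *
          (1 - Real.exp (-t)) ^ (numK K d y - 1) * unmaskedMarginal q0 y) -
        ((d : ℝ) - numK K d y) * qtClosedForm q0 t y := by
  have hunmask : ∀ i ∈ ({i | y i = maskTok K} : Finset (Fin d)),
      ∑ b ∈ univ.erase (maskTok K), qtClosedForm q0 t (update y i b) =
        Real.exp (-t * ((d : ℝ) - numK K d y + 1)) * (1 - Real.exp (-t)) ^ (numK K d y - 1) *
          unmaskedMarginal q0 y := fun i hi => by
    have hi : y i = maskTok K := (mem_filter.mp hi).2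
    have hm : 1 ≤ numK K d y := card_pos.mpr ⟨i, by simpa using hi⟩
    rw [← sum_unmaskedMarginal_update hsupp hi, mul_sum]
    refine sum_congr rfl fun b hb => ?_
    rw [qtClosedForm, numK_update_of_eq_maskTok hi (ne_of_mem_erase hb), Nat.cast_sub hm]
    ring_nf
  rw [fwdRate_mulVec_apply, sum_congr rfl hunmask, sum_const, nsmul_eq_mul]
  rfl

theorem qt_eq_qtClosedForm (hsupp : ∀ y i, y i = maskTok K → q0 y = 0) (t : ℝ) :
    qt K d q0 t = qtClosedForm q0 t := by
  have hode : ∀ t, HasDerivAt (qtClosedForm q0) (fwdRate K d *ᵥ qtClosedForm q0 t) t :=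
    fun t => hasDerivAt_pi.mpr fun y => by
      rw [fwdRate_mulVec_qtClosedForm hsupp]
      exact hasDerivAt_qtClosedForm t y
  simpa [qt, qtClosedForm_zero hsupp] using Matrix.exp_smul_mulVec_eq_of_hasDerivAt hode t

/-- The maskings of a clean sequence `y0` are indexed by their sets of masked coordinates,
so the masking weights sum to `((1 - e^{-t}) + e^{-t})^d = 1`. -/
theorem sum_maskings_weight_eq_one {y0 : Fin d → Fin K} (hy0 : ∀ i, y0 i ≠ maskTok K) (t : ℝ) :
    ∑ y with ∀ i, y i ≠ maskTok K → y0 i = y i,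
      Real.exp (-t * ((d : ℝ) - numK K d y)) * (1 - Real.exp (-t)) ^ numK K d y = 1 := by
  calc _ = ∑ S ∈ (univ : Finset (Fin d)).powerset,
        Real.exp (-t * ((d : ℝ) - #S)) * (1 - Real.exp (-t)) ^ #S := by
        refine sum_nbij' (fun y => ({i | y i = maskTok K} : Finset (Fin d)))
          (fun S i => if i ∈ S then maskTok K else y0 i) (by simp) ?_ ?_ ?_ (fun _ _ => rfl)
        · intro S _
          simp only [mem_filter, mem_univ, true_and]
          intro i hi
          simp_all
        · intro y hy
          funext i
          simp only [mem_filter, mem_univ, true_and] at hy ⊢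
          by_cases h : y i = maskTok K <;> simp [h, hy i]
        · intro S _
          ext i
          by_cases h : i ∈ S <;> simp [h, hy0 i]
    _ = ∑ S ∈ (univ : Finset (Fin d)).powerset,
        (1 - Real.exp (-t)) ^ #S * Real.exp (-t) ^ (d - #S) := by
        refine sum_congr rfl fun S _ => ?_
        rw [exp_neg_mul_sub_eq_pow t (by simpa using card_le_univ S), mul_comm]
    _ = 1 := by
        simpa using sum_pow_mul_eq_add_pow (1 - Real.exp (-t)) (Real.exp (-t)) (univ : Finset (Fin d))

theorem sum_qtClosedForm (hsupp : ∀ y i, y i = maskTok K → q0 y = 0) (hsum : ∑ y, q0 y = 1)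
    (t : ℝ) : ∑ y, qtClosedForm q0 t y = 1 := by
  calc ∑ y, qtClosedForm q0 t y
      = ∑ y0, ∑ y, if ∀ i, y i ≠ maskTok K → y0 i = y i then
          Real.exp (-t * ((d : ℝ) - numK K d y)) * (1 - Real.exp (-t)) ^ numK K d y * q0 y0
          else 0 := by
        simp only [qtClosedForm, unmaskedMarginal, mul_sum, ← sum_filter]
        exact sum_comm' fun _ _ => by simp
    _ = ∑ y0, q0 y0 := sum_congr rfl fun y0 _ => ?_
    _ = 1 := hsum
  by_cases hy0 : ∀ i, y0 i ≠ maskTok K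
  · rw [← sum_filter, ← sum_mul, sum_maskings_weight_eq_one hy0, one_mul]
  · obtain ⟨i, hi⟩ := not_forall_not.mp hy0
    simp [hsupp y0 i hi]

theorem qtClosedForm_nonneg (hq0 : ∀ y, 0 ≤ q0 y) {t : ℝ} (ht : 0 ≤ t) (y : Fin d → Fin K) :
    0 ≤ qtClosedForm q0 t y :=
  mul_nonneg (mul_nonneg (Real.exp_pos _).le (pow_nonneg (by simp [ht]) _))
    (unmaskedMarginal_nonneg hq0 y)

theorem qtClosedForm_le_mul_qTilde (hq0 : ∀ y, 0 ≤ q0 y) (hsum : ∑ y, q0 y = 1) {t : ℝ}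
    (ht : 0 ≤ t) (y : Fin d → Fin K) :
    qtClosedForm q0 t y ≤ (1 + Real.exp (-t)) ^ d * qTilde K d t y := by
  have hmask : (1 - Real.exp (-t)) ^ numK K d y * unmaskedMarginal q0 y ≤ 1 :=
    mul_le_one₀ (pow_le_one₀ (by simp [ht]) (by simp [(Real.exp_pos _).le]))
      (unmaskedMarginal_nonneg hq0 y) (unmaskedMarginal_le_one hq0 hsum y)
  have hpos : 0 < (1 + Real.exp (-t)) ^ d := by positivity
  rw [qTilde, mul_div_cancel₀ _ hpos.ne', qtClosedForm, mul_assoc]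
  exact mul_le_of_le_one_right (Real.exp_pos _).le hmask

theorem KLdiv_qt_qTilde_le (hq0 : ∀ y, 0 ≤ q0 y) (hsum : ∑ y, q0 y = 1)
    (hsupp : ∀ y i, y i = maskTok K → q0 y = 0) {t : ℝ} (ht : 0 ≤ t) :
    KLdiv (qt K d q0 t) (qTilde K d t) ≤ (1 + Real.exp (-t)) ^ d - 1 := by
  rw [qt_eq_qtClosedForm hsupp]
  calc KLdiv (qtClosedForm q0 t) (qTilde K d t) ≤ Real.log ((1 + Real.exp (-t)) ^ d) :=
        KLdiv_le_log_of_le_mul (qtClosedForm_nonneg hq0 ht) (sum_qtClosedForm hsupp hsum t)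
          (fun y => by unfold qTilde; positivity) (qtClosedForm_le_mul_qTilde hq0 hsum ht)
    _ ≤ (1 + Real.exp (-t)) ^ d - 1 := Real.log_le_sub_one_of_pos (by positivity)

end MaskedForwardProcess

theorem kl_forward_approx_general (K d : ℕ) [NeZero K]
    (q0 : (Fin d → Fin K) → ℝ)
    (hq0nonneg : ∀ y, 0 ≤ q0 y) (hq0sum : ∑ y, q0 y = 1)
    (hA2 : ∀ y, 0 < q0 y ↔ numK K d y = 0) :
    (∀ t : ℝ, 0 < t →
      KLdiv (qt K d q0 t) (qTilde K d t) ≤ (1 + Real.exp (-t)) ^ d - 1) ∧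
    (∀ ε : ℝ, 0 < ε → ε ≤ 1 → ∀ t : ℝ, Real.log (4 * d / ε) ≤ t →
      KLdiv (qt K d q0 t) (qTilde K d t) ≤ ε) := by
  have hsupp : ∀ y i, y i = maskTok K → q0 y = 0 := fun y i hi =>
    (hq0nonneg y).antisymm' <| not_lt.mp fun hpos =>
      numK_eq_zero_iff.mp ((hA2 y).mp hpos) i hi
  refine ⟨fun t ht => KLdiv_qt_qTilde_le hq0nonneg hq0sum hsupp ht.le, fun ε hε hε1 t ht => ?_⟩
  have hdecay : 4 * d * Real.exp (-t) ≤ ε := mul_exp_neg_le_of_log_div_le (by positivity) hε ht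
  have ht0 : 0 ≤ t := by
    rcases Nat.eq_zero_or_pos d with rfl | hd
    · simpa using ht
    · have : (1 : ℝ) ≤ d := by exact_mod_cast hd
      exact (Real.log_nonneg ((le_div_iff₀ hε).mpr (by linarith))).trans ht
  calc KLdiv (qt K d q0 t) (qTilde K d t) ≤ (1 + Real.exp (-t)) ^ d - 1 :=
        KLdiv_qt_qTilde_le hq0nonneg hq0sum hsupp ht0
    _ ≤ 2 * (d * Real.exp (-t)) := one_add_pow_sub_one_le (Real.exp_pos _).le (by linarith)
    _ ≤ ε := by linarith

/-- The KL divergence between the forward marginal `q_t` and the factorized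
approximation `q̃_t` decreases exponentially:
`KL(q_t ‖ q̃_t) ≤ (1+e^{-t})^d - 1`, and it is at most `ε` once `t ≥ ln(4d/ε)`. -/
theorem kl_forward_approx (K d : ℕ) [NeZero K] (hK : 2 ≤ K) (hd : 1 ≤ d)
    (q0 : (Fin d → Fin K) → ℝ)
    (hq0nonneg : ∀ y, 0 ≤ q0 y) (hq0sum : ∑ y, q0 y = 1)
    (hA2 : ∀ y, 0 < q0 y ↔ numK K d y = 0) :
    (∀ t : ℝ, 0 < t →
      KLdiv (qt K d q0 t) (qTilde K d t) ≤ (1 + Real.exp (-t)) ^ d - 1) ∧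
    (∀ ε : ℝ, 0 < ε → ε ≤ 1 → ∀ t : ℝ, Real.log (4 * d / ε) ≤ t →
      KLdiv (qt K d q0 t) (qTilde K d t) ≤ ε) :=
  kl_forward_approx_general K d q0 hq0nonneg hq0sum hA2
end

section
/- For every u ≥ 0 and all y, y' ∈ Y, the (y,y') entry of the matrix exponential exp(uR) equals ∏_{i=1}^d m_u(y_i, y'_i), where m_u(a,b) := 1 if a = b = K; m_u(a,b) := e^{−u} if a = b ≠ K; m_u(a,b) := 1 − e^{−u} if a = K and b ≠ K; and m_u(a,b) := 0 otherwise. -/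
open Matrix Finset

/-- The single-coordinate transition kernel `m_u`. -/
noncomputable def mKer (K : ℕ) [NeZero K] (u : ℝ) (a b : Fin K) : ℝ :=
  if a = maskTok K ∧ b = maskTok K then 1
  else if a = b then Real.exp (-u)
  else if a = maskTok K then 1 - Real.exp (-u)
  else 0

/-! The rate matrix `R` is the sum over coordinates `i` of the one-site rate matrix `E - 1`
acting on coordinate `i` alone, where `E = jumpTo (maskTok K)` sends every token to the mask.
Lifts to distinct coordinates commute, so `exp (u R)` is the tensor product over coordinates
of the one-site kernels `exp (u (E - 1))`. Since `1 - E` is idempotent,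
`exp (u (E - 1)) = 1 + (e⁻ᵘ - 1) (1 - E)`, whose entries are exactly `m_u`. -/

open NormedSpace in
lemma IsIdempotentElem.exp_smul {𝔸 : Type*} [NormedRing 𝔸] [NormedAlgebra ℝ 𝔸]
    [CompleteSpace 𝔸] {P : 𝔸} (hP : IsIdempotentElem P) (t : ℝ) :
    exp (t • P) = 1 + (Real.exp t - 1) • P := by
  have hterm : ∀ n : ℕ, (n.factorial⁻¹ : ℝ) • (t • P) ^ n =
      (t ^ n / n.factorial) • P + if n = 0 then 1 - P else 0 := by
    rintro (_ | n)
    · simp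
    · rw [smul_pow, hP.pow_succ_eq, smul_smul, if_neg n.succ_ne_zero, add_zero, inv_mul_eq_div]
  have hsum : HasSum (fun n : ℕ => (n.factorial⁻¹ : ℝ) • (t • P) ^ n)
      (Real.exp t • P + (1 - P)) := by
    simp_rw [hterm, Real.exp_eq_exp_ℝ]
    exact ((expSeries_div_hasSum_exp t).smul_const P).add (hasSum_ite_eq 0 (1 - P))
  rw [(exp_series_hasSum_exp' (𝕂 := ℝ) (t • P)).unique hsum, sub_smul, one_smul]
  abel

namespace Matrix

variable {ι α R : Type*} [Fintype ι] [CommSemiring R]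

def piKronecker (M : ι → Matrix α α R) : Matrix (ι → α) (ι → α) R :=
  of fun y y' => ∏ i, M i (y i) (y' i)

@[simp]
lemma piKronecker_apply (M : ι → Matrix α α R) (y y' : ι → α) :
    piKronecker M y y' = ∏ i, M i (y i) (y' i) := rfl

lemma piKronecker_one [DecidableEq α] : piKronecker (1 : ι → Matrix α α R) = 1 := by
  ext y y'
  simp only [piKronecker_apply, Pi.one_apply, one_apply, Fintype.prod_boole, funext_iff]

variable [DecidableEq ι]

lemma piKronecker_mul [Fintype α] (M N : ι → Matrix α α R) :
    piKronecker (M * N) = piKronecker M * piKronecker N := by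
  ext y y'
  simp only [piKronecker_apply, Pi.mul_apply, mul_apply, Fintype.prod_sum, prod_mul_distrib]

variable [DecidableEq α]

lemma piKronecker_mulSingle_apply (i : ι) (A : Matrix α α R) (y y' : ι → α) :
    piKronecker (Pi.mulSingle i A) y y' =
      A (y i) (y' i) * if ∀ j ≠ i, y j = y' j then 1 else 0 := by
  rw [piKronecker_apply, ← mul_prod_erase _ _ (mem_univ i), Pi.mulSingle_eq_same,
    prod_congr rfl fun j hj => by rw [Pi.mulSingle_eq_of_ne (ne_of_mem_erase hj), one_apply],
    prod_boole]
  simp only [mem_erase, mem_univ, and_true]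

variable [Fintype α]

def piKroneckerHom : (ι → Matrix α α R) →* Matrix (ι → α) (ι → α) R where
  toFun := piKronecker
  map_one' := piKronecker_one
  map_mul' := piKronecker_mul

def coordLift (i : ι) : Matrix α α R →ₐ[R] Matrix (ι → α) (ι → α) R :=
  AlgHom.ofLinearMap
    { toFun := fun A => piKronecker (Pi.mulSingle i A)
      map_add' := fun A B => by ext; simp only [piKronecker_mulSingle_apply, add_apply]; ring
      map_smul' := fun c A => by
        ext
        simp only [piKronecker_mulSingle_apply, smul_apply, smul_eq_mul, RingHom.id_apply]
        ring }
    (by simp [piKronecker_one]) (fun A B => by simp [← piKronecker_mul, Pi.mulSingle_mul])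

lemma coordLift_eq_piKroneckerHom (i : ι) (A : Matrix α α R) :
    coordLift i A = piKroneckerHom (Pi.mulSingle i A) := rfl

lemma coordLift_apply (i : ι) (A : Matrix α α R) (y y' : ι → α) :
    coordLift i A y y' = A (y i) (y' i) * if ∀ j ≠ i, y j = y' j then 1 else 0 :=
  piKronecker_mulSingle_apply i A y y'

lemma coordLift_commute {i j : ι} (hij : i ≠ j) (A B : Matrix α α R) :
    Commute (coordLift i A) (coordLift j B) := by
  rw [coordLift_eq_piKroneckerHom, coordLift_eq_piKroneckerHom]
  exact (Pi.mulSingle_commute (f := fun _ => Matrix α α R) hij A B).map piKroneckerHom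

lemma noncommProd_coordLift (M : ι → Matrix α α R) :
    univ.noncommProd (fun i => coordLift i (M i))
      (fun _ _ _ _ hij => coordLift_commute hij _ _) = piKronecker M := by
  simp_rw [coordLift_eq_piKroneckerHom]
  rw [← map_noncommProd _ _ fun i _ j _ _ => Pi.mulSingle_apply_commute M i j,
    noncommProd_mulSingle]
  rfl

open NormedSpace in
lemma exp_sum_coordLift {𝕂 : Type*} [RCLike 𝕂] (M : ι → Matrix α α 𝕂) :
    exp (∑ i, coordLift i (M i)) = piKronecker fun i => exp (M i) := by
  rw [Matrix.exp_sum_of_commute]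
  · have hexp (i : ι) : exp (coordLift i (M i)) = coordLift i (exp (M i)) := by
      open scoped Matrix.Norms.Operator in
      exact (map_exp (coordLift i)
        (coordLift (R := 𝕂) (α := α) i).toLinearMap.continuous_of_finiteDimensional _).symm
    rw [← noncommProd_coordLift]
    exact noncommProd_congr rfl (fun i _ => hexp i) _
  · intro i _ j _ hij
    exact coordLift_commute hij _ _

end Matrix

section AgreeOff

variable {ι α : Type*} {y y' : ι → α}

lemma eq_and_forall_ne_eq_iff (i : ι) : (y i = y' i ∧ ∀ j ≠ i, y j = y' j) ↔ y = y' := by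
  refine ⟨fun h => funext fun j => ?_, by rintro rfl; simp⟩
  by_cases hj : j = i
  · exact hj ▸ h.1
  · exact h.2 j hj

variable [Fintype ι] [DecidableEq ι] [DecidableEq α]

lemma forall_ne_eq_iff_filter_ne_eq_singleton (h : y ≠ y') (i : ι) :
    (∀ j ≠ i, y j = y' j) ↔ univ.filter (fun j => y j ≠ y' j) = {i} := by
  simp only [eq_singleton_iff_unique_mem, mem_filter, mem_univ, true_and]
  refine ⟨fun hy => ⟨fun hi => h (funext fun j => ?_), fun j => not_imp_comm.mp (hy j)⟩,
    fun hD j => not_imp_comm.mp (hD.2 j)⟩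
  by_cases hj : j = i
  · exact hj ▸ hi
  · exact hy j hj

lemma sum_boole_and_forall_ne_eq (h : y ≠ y') (p : ι → Prop) [DecidablePred p] :
    ∑ i, (if p i ∧ ∀ j ≠ i, y j = y' j then 1 else 0 : ℝ) =
      if #(univ.filter fun j => y j ≠ y' j) = 1 ∧ ∀ i, y i ≠ y' i → p i then 1 else 0 := by
  simp_rw [forall_ne_eq_iff_filter_ne_eq_singleton h, card_eq_one]
  by_cases hD : ∃ a, univ.filter (fun j => y j ≠ y' j) = {a}
  · obtain ⟨a, ha⟩ := hD
    have hmem (i : ι) : y i ≠ y' i ↔ i = a := by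
      simpa using congrArg (i ∈ ·) ha
    rw [Fintype.sum_eq_single a fun i hia => by simp [ha, Ne.symm hia]]
    refine if_congr ?_ rfl rfl
    rw [ha]
    simp [hmem]
  · rw [if_neg fun h' => hD h'.1]
    exact sum_eq_zero fun i _ => if_neg fun h' => hD ⟨i, h'.2⟩

end AgreeOff

section JumpTo

variable {α : Type*} [DecidableEq α]

def jumpTo {R : Type*} [Zero R] [One R] (m : α) : Matrix α α R :=
  of fun a _ => if a = m then 1 else 0

variable [Fintype α]

lemma isIdempotentElem_jumpTo {R : Type*} [NonAssocSemiring R] (m : α) :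
    IsIdempotentElem (jumpTo m : Matrix α α R) := by
  ext a b
  simp [jumpTo, mul_apply]

open NormedSpace in
lemma exp_smul_jumpTo_sub_one (m : α) (u : ℝ) :
    exp (u • (jumpTo m - 1 : Matrix α α ℝ)) = 1 + (Real.exp (-u) - 1) • (1 - jumpTo m) := by
  rw [show u • (jumpTo m - 1 : Matrix α α ℝ) = (-u) • (1 - jumpTo m) by module]
  open scoped Matrix.Norms.Operator in
  exact IsIdempotentElem.exp_smul (isIdempotentElem_jumpTo m).one_sub (-u)

end JumpTo

lemma mKer_eq_exp_apply (K : ℕ) [NeZero K] (u : ℝ) (a b : Fin K) :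
    mKer K u a b =
      NormedSpace.exp (u • (jumpTo (maskTok K) - 1 : Matrix (Fin K) (Fin K) ℝ)) a b := by
  rw [exp_smul_jumpTo_sub_one]
  simp only [mKer, jumpTo, Matrix.add_apply, Matrix.smul_apply, Matrix.sub_apply, one_apply,
    of_apply, smul_eq_mul]
  split_ifs <;> simp_all

lemma fwdRate_eq_sum_coordLift (K d : ℕ) [NeZero K] :
    fwdRate K d = ∑ i, coordLift i (jumpTo (maskTok K) - 1 : Matrix (Fin K) (Fin K) ℝ) := by
  ext y y'
  simp only [Matrix.sum_apply, coordLift_apply, Matrix.sub_apply, jumpTo, one_apply, of_apply,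
    sub_mul, sum_sub_distrib, ite_zero_mul_ite_zero, mul_one, eq_and_forall_ne_eq_iff,
    sum_const, card_univ, Fintype.card_fin, nsmul_eq_mul]
  by_cases h : y = y'
  · subst h
    simp [fwdRate, numK, sum_boole]
  · rw [if_neg h, mul_zero, sub_zero, fwdRate, if_neg h, ham]
    convert (sum_boole_and_forall_ne_eq h (y · = maskTok K)).symm

theorem forward_kernel_factorizes_general (K d : ℕ) [NeZero K]
    (u : ℝ) (y y' : Fin d → Fin K) :
    NormedSpace.exp (u • fwdRate K d) y y' = ∏ i, mKer K u (y i) (y' i) := by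
  simp_rw [fwdRate_eq_sum_coordLift, smul_sum, ← map_smul, exp_sum_coordLift, piKronecker_apply,
    mKer_eq_exp_apply]

/-- The forward transition kernel of masked discrete diffusion factorizes over
coordinates: `exp(uR)(y,y') = ∏ i, m_u(y_i, y'_i)`. -/
theorem forward_kernel_factorizes (K d : ℕ) [NeZero K] (hK : 2 ≤ K) (hd : 1 ≤ d)
    (u : ℝ) (hu : 0 ≤ u) (y y' : Fin d → Fin K) :
    NormedSpace.exp (u • fwdRate K d) y y' = ∏ i, mKer K u (y i) (y' i) :=
  forward_kernel_factorizes_general K d u y y'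
end

section
/- For every t ≥ 0, the matrix exponential exp(tA) is given entrywise by: exp(tA)(b,b) = e^{−t} for every b ≠ K; exp(tA)(K,b) = 1 − e^{−t} for every b ≠ K; exp(tA)(K,K) = 1; and all other entries equal 0. -/
open Matrix Finset

/-- The single-token rate matrix `A`: `A(K,b) = 1` and `A(b,b) = -1` for every
non-mask token `b`, and all other entries (including `A(K,K)`) are `0`. -/
noncomputable def tokA (K : ℕ) [NeZero K] : Matrix (Fin K) (Fin K) ℝ := fun a b =>
  if a = maskTok K ∧ b ≠ maskTok K then 1
  else if a = b ∧ b ≠ maskTok K then -1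
  else 0

/-!
The column of `A` at `K` vanishes and its column at `b ≠ K` is `e_K - e_b`, so `A² = -A`:
`-A` is idempotent. For an idempotent `P` the exponential series collapses, since `P ^ n = P`
for `n ≥ 1`, to `exp (s • P) = 1 + (eˢ - 1) • P`. With `P = -A` and `s = -t` this gives
`exp (t • A) = 1 + (1 - e⁻ᵗ) • A`, from which the entries are read off.
-/

open Nat NormedSpace

theorem IsIdempotentElem.exp_smul_s5 {𝕂 𝔸 : Type*} [RCLike 𝕂] [Ring 𝔸] [Algebra 𝕂 𝔸]
    [TopologicalSpace 𝔸] [IsTopologicalRing 𝔸] [ContinuousSMul 𝕂 𝔸] [T2Space 𝔸]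
    {P : 𝔸} (hP : IsIdempotentElem P) (s : 𝕂) :
    exp (s • P) = 1 + (exp s - 1) • P := by
  have hterm : ∀ n : ℕ, (n !⁻¹ : 𝕂) • (s • P) ^ n
      = ((n !⁻¹ : 𝕂) • s ^ n) • P + if n = 0 then 1 - P else 0 := by
    rintro (_ | n)
    · simp
    · rw [smul_pow, hP.pow_succ_eq, smul_smul, smul_eq_mul, if_neg n.succ_ne_zero, add_zero]
  have hsum : HasSum (fun n : ℕ => (n !⁻¹ : 𝕂) • (s • P) ^ n) (exp s • P + (1 - P)) := by
    simp only [hterm]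
    exact ((exp_series_hasSum_exp' (𝕂 := 𝕂) s).smul_const P).add (hasSum_ite_eq 0 (1 - P))
  rw [congrFun (exp_eq_tsum 𝕂) (s • P), hsum.tsum_eq, sub_smul, one_smul]
  abel

theorem exp_smul_of_mul_self_eq_neg {𝔸 : Type*} [Ring 𝔸] [Algebra ℝ 𝔸]
    [TopologicalSpace 𝔸] [IsTopologicalRing 𝔸] [ContinuousSMul ℝ 𝔸] [T2Space 𝔸]
    {A : 𝔸} (hA : A * A = -A) (t : ℝ) :
    exp (t • A) = 1 + (1 - Real.exp (-t)) • A := by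
  have hidem : IsIdempotentElem (-A) := by
    rw [IsIdempotentElem, neg_mul_neg, hA]
  rw [← neg_smul_neg, hidem.exp_smul_s5, ← Real.exp_eq_exp_ℝ, smul_neg, ← neg_smul]
  congr 2
  ring

theorem tokA_apply_maskTok (K : ℕ) [NeZero K] (a : Fin K) : tokA K a (maskTok K) = 0 := by
  simp [tokA]

theorem tokA_apply_of_ne (K : ℕ) [NeZero K] {b : Fin K} (hb : b ≠ maskTok K) (c : Fin K) :
    tokA K c b = (if c = maskTok K then 1 else 0) - if c = b then 1 else 0 := by
  unfold tokA
  grind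

theorem tokA_mul_self (K : ℕ) [NeZero K] : tokA K * tokA K = -tokA K := by
  ext a b
  by_cases hb : b = maskTok K
  · simp [mul_apply, hb, tokA_apply_maskTok]
  · simp [mul_apply, tokA_apply_of_ne K hb, mul_sub, tokA_apply_maskTok]

theorem exp_tokA_entries_general (K : ℕ) [NeZero K] (t : ℝ) :
    (∀ b : Fin K, b ≠ maskTok K →
      NormedSpace.exp (t • tokA K) b b = Real.exp (-t)) ∧
    (∀ b : Fin K, b ≠ maskTok K →
      NormedSpace.exp (t • tokA K) (maskTok K) b = 1 - Real.exp (-t)) ∧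
    NormedSpace.exp (t • tokA K) (maskTok K) (maskTok K) = 1 ∧
    (∀ a b : Fin K, a ≠ b → a ≠ maskTok K →
      NormedSpace.exp (t • tokA K) a b = 0) := by
  rw [exp_smul_of_mul_self_eq_neg (tokA_mul_self K) t]
  refine ⟨fun b hb => ?_, fun b hb => ?_, ?_, fun a b hab ha => ?_⟩
  · simp [tokA, hb]
  · simp [tokA, hb, Ne.symm hb]
  · simp [tokA]
  · simp [tokA, hab, ha]

/-- The explicit form of the matrix exponential `exp(tA)` for `t ≥ 0`:
`exp(tA)(b,b) = e^{-t}` and `exp(tA)(K,b) = 1 - e^{-t}` for `b ≠ K`,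
`exp(tA)(K,K) = 1`, and all other entries vanish. -/
theorem exp_tokA_entries (K : ℕ) [NeZero K] (hK : 2 ≤ K) (t : ℝ) (ht : 0 ≤ t) :
    (∀ b : Fin K, b ≠ maskTok K →
      NormedSpace.exp (t • tokA K) b b = Real.exp (-t)) ∧
    (∀ b : Fin K, b ≠ maskTok K →
      NormedSpace.exp (t • tokA K) (maskTok K) b = 1 - Real.exp (-t)) ∧
    NormedSpace.exp (t • tokA K) (maskTok K) (maskTok K) = 1 ∧
    (∀ a b : Fin K, a ≠ b → a ≠ maskTok K →
      NormedSpace.exp (t • tokA K) a b = 0) :=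
  exp_tokA_entries_general K t
end

section
/- Under Assumption [A2], for every t ≥ 0 and every y ∈ Y, the forward marginal satisfies q_t(y) ≤ e^{−t·(d − numK(y))}. -/
open Matrix Finset

/-!
Let `y` have `m` masked coordinates and let `C` be the cylinder of states that agree with `y`
off its masks. A masked coordinate stays masked, and each unmasked one is masked at rate `1`,
so the chain leaves `C` at the constant rate `d - m` and can never enter it: the indicator of
`C` is a left eigenvector of `R` with eigenvalue `-(d - m)`. Hence
`q_t(C) = e^{-t(d-m)} q₀(C) ≤ e^{-t(d-m)}`, and `q_t(y) ≤ q_t(C)` because `exp(tR)` is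
entrywise nonnegative, the off-diagonal entries of `R` being nonnegative.
-/

open NormedSpace

namespace Matrix

variable {n : Type*} [Fintype n] [DecidableEq n]

open scoped Norms.Operator in
theorem exp_apply_nonneg {A : Matrix n n ℝ} (hA : ∀ i j, 0 ≤ A i j) (i j : n) :
    0 ≤ exp A i j :=
  (Pi.hasSum.mp (Pi.hasSum.mp (exp_series_hasSum_exp' (𝕂 := ℝ) A) i) j).nonneg
    fun k => mul_nonneg (by positivity) (pow_apply_nonneg hA k i j)

theorem exp_apply_nonneg_of_offDiag_nonneg {A : Matrix n n ℝ}
    (hA : ∀ i j, i ≠ j → 0 ≤ A i j) (i j : n) : 0 ≤ exp A i j := by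
  set c := ∑ k, |A k k|
  have hshift : ∀ k l, 0 ≤ (A + c • 1) k l := by
    intro k l
    rcases eq_or_ne k l with rfl | hkl
    · have : |A k k| ≤ c :=
        single_le_sum (f := fun k => |A k k|) (fun _ _ => abs_nonneg _) (mem_univ k)
      simp only [add_apply, smul_apply, one_apply_eq, smul_eq_mul, mul_one]
      linarith [neg_abs_le (A k k)]
    · simpa [one_apply_ne hkl] using hA k l hkl
  have hexp : exp A = Real.exp (-c) • exp (A + c • 1) := by
    have hcomm : Commute (A + c • 1) ((-c) • 1) := (Commute.one_right _).smul_right _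
    have hscalar : (exp fun _ : n => -c) = fun _ => Real.exp (-c) := by
      ext; simp [Real.exp_eq_exp_ℝ]
    conv_lhs => rw [← add_neg_cancel_right A (c • (1 : Matrix n n ℝ)), ← neg_smul]
    rw [exp_add_of_commute _ _ hcomm, smul_one_eq_diagonal (-c), exp_diagonal, hscalar,
      ← smul_one_eq_diagonal, mul_smul_comm, mul_one]
  rw [hexp, smul_apply, smul_eq_mul]
  exact mul_nonneg (Real.exp_pos _).le (exp_apply_nonneg hshift i j)

open scoped Norms.Operator in
theorem vecMul_exp_of_vecMul_eq_smul {A : Matrix n n ℝ} {w : n → ℝ} {c : ℝ}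
    (h : w ᵥ* A = c • w) : w ᵥ* exp A = Real.exp c • w := by
  -- the eigenvalue equation is the semiconjugacy `W * A = c • W`, `W` having every row `w`
  set W : Matrix n n ℝ := of fun _ => w
  have hW : ∀ B : Matrix n n ℝ, W * B = of fun _ => w ᵥ* B := fun _ => rfl
  have hsemi : SemiconjBy W A (algebraMap ℝ _ c) := by
    rw [SemiconjBy, hW, h, Algebra.algebraMap_eq_smul_one, smul_mul_assoc, one_mul]
    rfl
  have hexp := hsemi.exp_right
  rw [SemiconjBy, ← algebraMap_exp_comm, hW, Algebra.algebraMap_eq_smul_one, smul_mul_assoc,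
    one_mul, ← Real.exp_eq_exp_ℝ] at hexp
  ext j
  exact congrFun₂ hexp j j

end Matrix

section MaskedChain

variable {K d : ℕ} [NeZero K]

lemma card_unmasked_add_numK (y : Fin d → Fin K) :
    #{i | y i ≠ maskTok K} + numK K d y = d := by
  rw [numK, add_comm, card_filter_add_card_filter_not, card_univ, Fintype.card_fin]

lemma sub_numK_eq_card_unmasked (y : Fin d → Fin K) :
    (d : ℝ) - numK K d y = #{i | y i ≠ maskTok K} := by
  rw [sub_eq_iff_eq_add, ← Nat.cast_add, card_unmasked_add_numK]

lemma ham_eq_one_and_masked_iff_s6 {z y : Fin d → Fin K} :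
    (ham z y = 1 ∧ ∀ i, z i ≠ y i → z i = maskTok K) ↔
      ∃ i, y i ≠ maskTok K ∧ Function.update y i (maskTok K) = z := by
  constructor
  · rintro ⟨hham, hmask⟩
    obtain ⟨i, hi⟩ := card_eq_one.mp hham
    have hdiff : ∀ j, z j ≠ y j ↔ j = i := fun j => by
      simpa using congrArg (j ∈ ·) hi
    have hzi : z i = maskTok K := hmask i ((hdiff i).mpr rfl)
    refine ⟨i, fun h => (hdiff i).mpr rfl (hzi.trans h.symm), funext fun j => ?_⟩
    rcases eq_or_ne j i with rfl | hji
    · rw [Function.update_self, hzi]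
    · rw [Function.update_of_ne hji]
      exact (not_not.mp (mt (hdiff j).mp hji)).symm
  · rintro ⟨i, hi, rfl⟩
    have hdiff : ∀ j, Function.update y i (maskTok K) j ≠ y j ↔ j = i := fun j => by
      rcases eq_or_ne j i with rfl | hji
      · simp [Ne.symm hi]
      · simp [hji]
    refine ⟨card_eq_one.mpr ⟨i, ?_⟩, fun j hj => ?_⟩
    · ext j; simp [hdiff j]
    · rw [(hdiff j).mp hj, Function.update_self]

lemma vecMul_fwdRate_apply (f : (Fin d → Fin K) → ℝ) (y : Fin d → Fin K) :
    (f ᵥ* fwdRate K d) y =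
      ∑ i with y i ≠ maskTok K, (f (Function.update y i (maskTok K)) - f y) := by
  set upd := fun i => Function.update y i (maskTok K)
  set S := (univ.filter fun i => y i ≠ maskTok K).image upd
  have hoff : ∀ z, z ≠ y → fwdRate K d z y = if z ∈ S then 1 else 0 := by
    intro z hz
    simp only [fwdRate, if_neg hz, ham_eq_one_and_masked_iff_s6, S, mem_image, mem_filter,
      mem_univ, true_and, upd]
  have hS : S ⊆ univ.erase y := by
    simp only [S, subset_iff, mem_image, mem_filter, mem_univ, true_and, mem_erase, and_true]
    rintro _ ⟨i, hi, rfl⟩ h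
    exact hi (by simpa [upd] using (congrFun h i).symm)
  have hinj : Set.InjOn upd (univ.filter fun i => y i ≠ maskTok K) := by
    intro i hi j _ hij
    by_contra hne
    have := congrFun hij i
    simp only [upd, Function.update_self, Function.update_of_ne hne] at this
    exact (mem_filter.mp hi).2 this.symm
  rw [vecMul, dotProduct, ← add_sum_erase _ _ (mem_univ y),
    sum_congr rfl fun z hz => by rw [hoff z (ne_of_mem_erase hz), mul_ite, mul_one, mul_zero],
    sum_ite_mem, inter_eq_right.mpr hS, sum_image hinj, sum_sub_distrib, sum_const,
    nsmul_eq_mul, fwdRate, if_pos rfl, sub_numK_eq_card_unmasked]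
  ring

lemma fwdRate_apply_nonneg_of_ne {z y : Fin d → Fin K} (h : z ≠ y) : 0 ≤ fwdRate K d z y := by
  simp only [fwdRate, if_neg h]
  split_ifs <;> norm_num

lemma qt_nonneg {q0 : (Fin d → Fin K) → ℝ} (hq0 : ∀ y, 0 ≤ q0 y) {t : ℝ} (ht : 0 ≤ t)
    (y : Fin d → Fin K) : 0 ≤ qt K d q0 t y :=
  sum_nonneg fun z _ => mul_nonneg
    (exp_apply_nonneg_of_offDiag_nonneg
      (fun _ _ h => mul_nonneg ht (fwdRate_apply_nonneg_of_ne h)) y z) (hq0 z)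

def cylinder (y : Fin d → Fin K) : Finset (Fin d → Fin K) :=
  {z | ∀ i, y i ≠ maskTok K → z i = y i}

def cylinderIndicator (y : Fin d → Fin K) : (Fin d → Fin K) → ℝ :=
  fun z => if z ∈ cylinder y then 1 else 0

lemma mem_cylinder_self (y : Fin d → Fin K) : y ∈ cylinder y := by
  simp [cylinder]

lemma update_mask_mem_cylinder_iff {y z : Fin d → Fin K} {i : Fin d} :
    Function.update z i (maskTok K) ∈ cylinder y ↔ z ∈ cylinder y ∧ y i = maskTok K := by
  simp only [cylinder, mem_filter, mem_univ, true_and]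
  constructor
  · intro h
    have hyi : y i = maskTok K := by_contra fun hyi => hyi (by simpa using (h i hyi).symm)
    refine ⟨fun j hj => ?_, hyi⟩
    have hji : j ≠ i := fun hji => hj (hji ▸ hyi)
    simpa [Function.update_of_ne hji] using h j hj
  · rintro ⟨h, hyi⟩ j hj
    have hji : j ≠ i := fun hji => hj (hji ▸ hyi)
    simpa [Function.update_of_ne hji] using h j hj

lemma cylinderIndicator_vecMul_fwdRate (y : Fin d → Fin K) :
    cylinderIndicator y ᵥ* fwdRate K d = (-((d : ℝ) - numK K d y)) • cylinderIndicator y := by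
  ext z
  rw [vecMul_fwdRate_apply, Pi.smul_apply, smul_eq_mul, sub_numK_eq_card_unmasked]
  simp only [cylinderIndicator, update_mask_mem_cylinder_iff]
  by_cases hz : z ∈ cylinder y
  · have hunmasked : (univ.filter fun i => z i ≠ maskTok K ∧ y i ≠ maskTok K) =
        univ.filter fun i => y i ≠ maskTok K := by
      simp only [cylinder, mem_filter, mem_univ, true_and] at hz
      ext i
      simp only [mem_filter, mem_univ, true_and, and_iff_right_iff_imp]
      exact fun hyi => hz i hyi ▸ hyi
    simp only [hz, true_and, if_true]
    rw [sum_congr rfl fun i _ => show (if y i = maskTok K then (1 : ℝ) else 0) - 1 =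
      -(if y i ≠ maskTok K then 1 else 0) by split_ifs <;> simp_all]
    rw [sum_neg_distrib, sum_boole, filter_filter, hunmasked, mul_one]
  · simp [hz]

lemma sum_cylinder_qt (q0 : (Fin d → Fin K) → ℝ) (t : ℝ) (y : Fin d → Fin K) :
    ∑ z ∈ cylinder y, qt K d q0 t z =
      Real.exp (-t * ((d : ℝ) - numK K d y)) * ∑ z ∈ cylinder y, q0 z := by
  have hsum : ∀ v : (Fin d → Fin K) → ℝ, ∑ z ∈ cylinder y, v z = cylinderIndicator y ⬝ᵥ v := by
    intro v
    simp [cylinderIndicator, dotProduct, ite_mul, sum_ite_mem]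
  have heig : cylinderIndicator y ᵥ* (t • fwdRate K d) =
      (-t * ((d : ℝ) - numK K d y)) • cylinderIndicator y := by
    rw [vecMul_smul, cylinderIndicator_vecMul_fwdRate, smul_smul]
    ring_nf
  rw [hsum, hsum, qt, dotProduct_mulVec, vecMul_exp_of_vecMul_eq_smul heig, smul_dotProduct,
    smul_eq_mul]

end MaskedChain

theorem qt_le_exp_general (K d : ℕ) [NeZero K]
    (q0 : (Fin d → Fin K) → ℝ)
    (hq0nonneg : ∀ y, 0 ≤ q0 y) (hq0sum : ∑ y, q0 y = 1)
    (t : ℝ) (ht : 0 ≤ t) (y : Fin d → Fin K) :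
    qt K d q0 t y ≤ Real.exp (-t * ((d : ℝ) - (numK K d y : ℝ))) := by
  calc qt K d q0 t y
      ≤ ∑ z ∈ cylinder y, qt K d q0 t z :=
        single_le_sum (fun z _ => qt_nonneg hq0nonneg ht z) (mem_cylinder_self y)
    _ = Real.exp (-t * ((d : ℝ) - numK K d y)) * ∑ z ∈ cylinder y, q0 z :=
        sum_cylinder_qt q0 t y
    _ ≤ Real.exp (-t * ((d : ℝ) - numK K d y)) * ∑ z, q0 z := by
      gcongr
      · exact fun z _ _ => hq0nonneg z
      · exact subset_univ _
    _ = Real.exp (-t * ((d : ℝ) - numK K d y)) := by rw [hq0sum, mul_one]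

/-- Under Assumption [A2], the forward marginal is bounded by
`q_t(y) ≤ e^{-t(d - numK y)}`. -/
theorem qt_le_exp (K d : ℕ) [NeZero K] (hK : 2 ≤ K) (hd : 1 ≤ d)
    (q0 : (Fin d → Fin K) → ℝ)
    (hq0nonneg : ∀ y, 0 ≤ q0 y) (hq0sum : ∑ y, q0 y = 1)
    (hA2 : ∀ y, 0 < q0 y ↔ numK K d y = 0)
    (t : ℝ) (ht : 0 ≤ t) (y : Fin d → Fin K) :
    qt K d q0 t y ≤ Real.exp (-t * ((d : ℝ) - (numK K d y : ℝ))) :=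
  qt_le_exp_general K d q0 hq0nonneg hq0sum t ht y
end
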